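/- If there is a fixed vector ν ∈ ℝᵐ such that the second derivative of f satisfies H(x)[w,w] = ‖w‖²ν for every x, w ∈ ℝⁿ, then the Hug iterates satisfy f(x_k) = f(x₀) exactly, for every k ≥ 0. -/

import Mathlib

/-!
Since `D²f(y)[a, a] = ‖a‖² ν` does not depend on `y`, `f` is exactly quadratic along every line:
`f (y + a) = f y + Df(y) a + ½ ‖a‖² ν`. Expand `f(x_{k+1})` and `f(x_k)` this way around the
midpoint `x_{k+1/2}`, with `a = (δ/2) v_{k+1}` and `a = -(δ/2) v_k`. The quadratic terms agree
because the reflection `R = I - 2N` is orthogonal, so `‖v_{k+1}‖ = ‖v_k‖`; the linear terms cancel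
because `J N = J` gives `J R = -J`, i.e. `J (v_{k+1} + v_k) = 0`.
-/

open Matrix MeasureTheory

noncomputable section

abbrev Evec (n : ℕ) : Type := EuclideanSpace ℝ (Fin n)

/-- Apply a matrix to a vector of Euclidean space. -/
def mvE {m n : ℕ} (A : Matrix (Fin m) (Fin n) ℝ) (v : Evec n) : Evec m :=
  Matrix.toEuclideanLin A v

/-- Moore–Penrose pseudoinverse `Aᵀ(AAᵀ)⁻¹` of a full-rank wide matrix. -/
def pinv {m n : ℕ} (A : Matrix (Fin m) (Fin n) ℝ) : Matrix (Fin n) (Fin m) ℝ :=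
  Aᵀ * (A * Aᵀ)⁻¹

/-- Orthogonal projection onto the normal space: `N = A⁺A`. -/
def Nproj {m n : ℕ} (A : Matrix (Fin m) (Fin n) ℝ) : Matrix (Fin n) (Fin n) ℝ :=
  pinv A * A

/-- Orthogonal projection onto the tangent space: `T = I - N`. -/
def Tproj {m n : ℕ} (A : Matrix (Fin m) (Fin n) ℝ) : Matrix (Fin n) (Fin n) ℝ :=
  1 - Nproj A

/-- Reflection: `R = I - 2N`. -/
def Rrefl {m n : ℕ} (A : Matrix (Fin m) (Fin n) ℝ) : Matrix (Fin n) (Fin n) ℝ :=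
  1 - (2 : ℝ) • Nproj A

section LineTaylor

variable {E F : Type*} [NormedAddCommGroup E] [NormedSpace ℝ E]
  [NormedAddCommGroup F] [NormedSpace ℝ F]

theorem hasDerivAt_comp_add_smul {g : E → F} {y a : E} {t : ℝ}
    (hg : DifferentiableAt ℝ g (y + t • a)) :
    HasDerivAt (fun s : ℝ => g (y + s • a)) (fderiv ℝ g (y + t • a) a) t := by
  have hline : HasDerivAt (fun s : ℝ => y + s • a) a t := by
    simpa using ((hasDerivAt_id t).smul_const a).const_add y
  exact hg.hasFDerivAt.comp_hasDerivAt t hline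

theorem add_eq_of_iteratedFDeriv_two_eq {f : E → F} (hf : ContDiff ℝ 2 f) {a : E} {c : F}
    (hc : ∀ y, iteratedFDeriv ℝ 2 f y ![a, a] = c) (y : E) :
    f (y + a) = f y + fderiv ℝ f y a + (2⁻¹ : ℝ) • c := by
  have hf1 : Differentiable ℝ f := hf.differentiable (by norm_num)
  have hf2 : Differentiable ℝ (fderiv ℝ f) :=
    (hf.fderiv_right (m := 1) le_rfl).differentiable one_ne_zero
  have hslope (t : ℝ) : HasDerivAt
      (fun t : ℝ => fderiv ℝ f (y + t • a) a - fderiv ℝ f y a - t • c) 0 t := by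
    have hD2 := (hasDerivAt_comp_add_smul (hf2 (y + t • a))).clm_apply (hasDerivAt_const t a)
    refine ((hD2.sub_const (fderiv ℝ f y a)).fun_sub
      ((hasDerivAt_id t).smul_const c)).congr_deriv ?_
    rw [← hc (y + t • a), iteratedFDeriv_two_apply]
    simp
  have slope_eq_zero (t : ℝ) : fderiv ℝ f (y + t • a) a - fderiv ℝ f y a - t • c = 0 := by
    simpa using is_const_of_deriv_eq_zero (fun t => (hslope t).differentiableAt)
      (fun t => (hslope t).deriv) t 0
  have hremainder (t : ℝ) : HasDerivAt
      (fun t : ℝ => f (y + t • a) - t • fderiv ℝ f y a - (t ^ 2 / 2) • c) 0 t := by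
    refine (((hasDerivAt_comp_add_smul (hf1 (y + t • a))).fun_sub
      ((hasDerivAt_id t).smul_const (fderiv ℝ f y a))).fun_sub
      (((hasDerivAt_pow 2 t).div_const 2).smul_const c)).congr_deriv ?_
    rw [← slope_eq_zero t]
    simp
  have hconst := is_const_of_deriv_eq_zero (fun t => (hremainder t).differentiableAt)
    (fun t => (hremainder t).deriv) 1 0
  simp only [one_smul, one_pow, one_div, zero_smul, add_zero, sub_zero, ne_eq,
    OfNat.ofNat_ne_zero, not_false_eq_true, zero_pow, zero_div] at hconst
  rw [← hconst]
  module

theorem eq_of_fderiv_add_eq_zero_of_norm_eq {f : E → F} (hf : ContDiff ℝ 2 f) {ν : F}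
    (hν : ∀ y w : E, iteratedFDeriv ℝ 2 f y ![w, w] = ‖w‖ ^ 2 • ν) {h v w : E}
    (hvw : fderiv ℝ f h (w + v) = 0) (hnorm : ‖w‖ = ‖v‖) (s : ℝ) :
    f (h + s • w) = f (h - s • v) := by
  have hw := add_eq_of_iteratedFDeriv_two_eq hf (fun y => hν y (s • w)) h
  have hv := add_eq_of_iteratedFDeriv_two_eq hf (fun y => hν y (-(s • v))) h
  rw [← sub_eq_add_neg] at hv
  have hlin : fderiv ℝ f h (s • w) + fderiv ℝ f h (s • v) = 0 := by
    rw [← map_add, ← smul_add, map_smul, hvw, smul_zero]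
  rw [hw, hv, norm_neg, norm_smul, norm_smul, hnorm, map_neg]
  linear_combination (norm := module) hlin

end LineTaylor

section MatrixAction

variable {l m n : ℕ}

theorem mvE_mul (A : Matrix (Fin l) (Fin m) ℝ) (B : Matrix (Fin m) (Fin n) ℝ) (u : Evec n) :
    mvE (A * B) u = mvE A (mvE B u) := by
  simp [mvE]

theorem norm_mvE_of_transpose_mul_self_eq_one {B : Matrix (Fin m) (Fin n) ℝ}
    (hB : Bᵀ * B = 1) (u : Evec n) : ‖mvE B u‖ = ‖u‖ := by
  have hsq : ‖mvE B u‖ ^ 2 = ‖u‖ ^ 2 := by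
    rw [← real_inner_self_eq_norm_sq, ← real_inner_self_eq_norm_sq, mvE,
      ← LinearMap.adjoint_inner_left, ← toEuclideanLin_conjTranspose_eq_adjoint,
      conjTranspose_eq_transpose_of_trivial]
    change inner ℝ (mvE Bᵀ (mvE B u)) u = _
    rw [← mvE_mul, hB]
    simp [mvE]
  exact (pow_left_inj₀ (norm_nonneg _) (norm_nonneg _) two_ne_zero).mp hsq

end MatrixAction

section FullRank

variable {m n : ℕ} {A : Matrix (Fin m) (Fin n) ℝ}

theorem isUnit_det_mul_transpose_of_rank_eq (h : A.rank = m) : IsUnit (A * Aᵀ).det := by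
  have hrange : LinearMap.range (A * Aᵀ).mulVecLin = ⊤ := by
    apply Submodule.eq_top_of_finrank_eq
    rw [← Matrix.rank, rank_self_mul_transpose, h, Module.finrank_fin_fun]
  rw [← isUnit_iff_isUnit_det, ← mulVec_surjective_iff_isUnit]
  exact LinearMap.range_eq_top.mp hrange

theorem mul_pinv_of_rank_eq (h : A.rank = m) : A * pinv A = 1 := by
  rw [pinv, ← Matrix.mul_assoc, mul_nonsing_inv _ (isUnit_det_mul_transpose_of_rank_eq h)]

theorem mul_Nproj_of_rank_eq (h : A.rank = m) : A * Nproj A = A := by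
  rw [Nproj, ← Matrix.mul_assoc, mul_pinv_of_rank_eq h, Matrix.one_mul]

theorem Nproj_transpose (A : Matrix (Fin m) (Fin n) ℝ) : (Nproj A)ᵀ = Nproj A := by
  rw [Nproj, pinv, transpose_mul, transpose_mul, transpose_transpose, transpose_nonsing_inv,
    transpose_mul, transpose_transpose, Matrix.mul_assoc]

theorem Nproj_mul_self_of_rank_eq (h : A.rank = m) : Nproj A * Nproj A = Nproj A := by
  conv_lhs => enter [1]; rw [Nproj]
  rw [Matrix.mul_assoc, mul_Nproj_of_rank_eq h, Nproj]

theorem mul_Rrefl_of_rank_eq (h : A.rank = m) : A * Rrefl A = -A := by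
  rw [Rrefl, Matrix.mul_sub, Matrix.mul_one, Matrix.mul_smul, mul_Nproj_of_rank_eq h]
  module

theorem Rrefl_transpose_mul_self_of_rank_eq (h : A.rank = m) :
    (Rrefl A)ᵀ * Rrefl A = 1 := by
  rw [Rrefl, transpose_sub, transpose_one, transpose_smul, Nproj_transpose]
  simp only [Matrix.sub_mul, Matrix.mul_sub, Matrix.smul_mul, Matrix.mul_smul, Matrix.one_mul,
    Matrix.mul_one, Nproj_mul_self_of_rank_eq h]
  module

theorem mvE_Rrefl_add_self_of_rank_eq (h : A.rank = m) (v : Evec n) :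
    mvE A (mvE (Rrefl A) v + v) = 0 := by
  rw [mvE, map_add, ← mvE, ← mvE, ← mvE_mul, mul_Rrefl_of_rank_eq h]
  simp [mvE]

theorem norm_mvE_Rrefl_of_rank_eq (h : A.rank = m) (v : Evec n) :
    ‖mvE (Rrefl A) v‖ = ‖v‖ :=
  norm_mvE_of_transpose_mul_self_eq_one (Rrefl_transpose_mul_self_of_rank_eq h) v

end FullRank

theorem hug_exact_level_preservation_general
    (m n : ℕ)
    (f : Evec n → Evec m) (hf : ContDiff ℝ (⊤ : ℕ∞) f)
    (J : Evec n → Matrix (Fin m) (Fin n) ℝ)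
    (hJ : ∀ x, HasFDerivAt f
      (LinearMap.toContinuousLinearMap (Matrix.toEuclideanLin (J x))) x)
    (hrank : ∀ x, (J x).rank = m)
    (δ : ℝ)
    (x xh v : ℕ → Evec n)
    (hxh : ∀ k, xh k = x k + (δ / 2) • v k)
    (hv : ∀ k, v (k + 1) = mvE (Rrefl (J (xh k))) (v k))
    (hx : ∀ k, x (k + 1) = xh k + (δ / 2) • v (k + 1))
    (ν : Evec m)
    (hν : ∀ (y w : Evec n), iteratedFDeriv ℝ 2 f y ![w, w] = ‖w‖ ^ 2 • ν) :
    ∀ k : ℕ, f (x k) = f (x 0) := by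
  have hf2 : ContDiff ℝ 2 f := hf.of_le (WithTop.coe_le_coe.mpr le_top)
  have step (k : ℕ) : f (x (k + 1)) = f (x k) := by
    have hnormal : fderiv ℝ f (xh k) (v (k + 1) + v k) = 0 := by
      rw [(hJ (xh k)).fderiv, hv k]
      exact mvE_Rrefl_add_self_of_rank_eq (hrank _) (v k)
    have hnorm : ‖v (k + 1)‖ = ‖v k‖ := by
      rw [hv k]
      exact norm_mvE_Rrefl_of_rank_eq (hrank _) (v k)
    have hx0 : x k = xh k - (δ / 2) • v k := by rw [hxh k, add_sub_cancel_right]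
    rw [hx k, hx0]
    exact eq_of_fderiv_add_eq_zero_of_norm_eq hf2 hν hnormal hnorm (δ / 2)
  intro k
  induction k with
  | zero => rfl
  | succ k ih => rw [step k, ih]

theorem hug_exact_level_preservation
    (m n : ℕ) (hm : 0 < m) (hmn : m < n)
    (f : Evec n → Evec m) (hf : ContDiff ℝ (⊤ : ℕ∞) f)
    (J : Evec n → Matrix (Fin m) (Fin n) ℝ)
    (hJ : ∀ x, HasFDerivAt f
      (LinearMap.toContinuousLinearMap (Matrix.toEuclideanLin (J x))) x)
    (hrank : ∀ x, (J x).rank = m)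
    (δ : ℝ) (hδ : 0 < δ)
    (x xh v : ℕ → Evec n)
    (hxh : ∀ k, xh k = x k + (δ / 2) • v k)
    (hv : ∀ k, v (k + 1) = mvE (Rrefl (J (xh k))) (v k))
    (hx : ∀ k, x (k + 1) = xh k + (δ / 2) • v (k + 1))
    (ν : Evec m)
    (hν : ∀ (y w : Evec n), iteratedFDeriv ℝ 2 f y ![w, w] = ‖w‖ ^ 2 • ν) :
    ∀ k : ℕ, f (x k) = f (x 0) :=
  hug_exact_level_preservation_general m n f hf J hJ hrank δ x xh v hxh hv hx ν hν
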